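/- arXiv:2605.10784 — 3 statements merged into one kernel-verified Lean document; each statement's English description precedes it below -/
import Mathlib

section
/- The Hessian of L(θ) = -log σ(-log Σ_{j=1}^m exp(β(φ_j·θ + b_j))) equals β²(1-σ(Z(θ)))[σ(Z(θ)) φ̄ φ̄^⊤ + Σ_j q_j(θ)(φ_j - φ̄)(φ_j - φ̄)^⊤], where Z(θ) = -log Σ_j exp(β(φ_j·θ + b_j)), q_j are the softmax weights, and φ̄ = Σ_j q_j(θ) φ_j. -/
open RealInnerProductSpace Finset

noncomputable def sigmoid (z : ℝ) : ℝ := 1 / (1 + Real.exp (-z))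

noncomputable def Zfun {d m : ℕ} (φ : Fin m → EuclideanSpace ℝ (Fin d))
    (b : Fin m → ℝ) (β : ℝ) (θ : EuclideanSpace ℝ (Fin d)) : ℝ :=
  -Real.log (∑ j, Real.exp (β * (⟪φ j, θ⟫ + b j)))

noncomputable def softmaxWeight {d m : ℕ} (φ : Fin m → EuclideanSpace ℝ (Fin d))
    (b : Fin m → ℝ) (β : ℝ) (θ : EuclideanSpace ℝ (Fin d)) (j : Fin m) : ℝ :=
  Real.exp (β * (⟪φ j, θ⟫ + b j)) / ∑ k, Real.exp (β * (⟪φ k, θ⟫ + b k))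

noncomputable def softmaxMean {d m : ℕ} (φ : Fin m → EuclideanSpace ℝ (Fin d))
    (b : Fin m → ℝ) (β : ℝ) (θ : EuclideanSpace ℝ (Fin d)) : EuclideanSpace ℝ (Fin d) :=
  ∑ j, softmaxWeight φ b β θ j • φ j

/-!
For `m > 0` write `S = ∑ⱼ eⱼ` with `eⱼ = exp (β (⟪φⱼ, θ⟫ + bⱼ))`. Then `σ(Z) = (1 + S)⁻¹`,
so the loss is `log (1 + S)`, whose gradient is `β (1 + S)⁻¹ V` with `V = ∑ⱼ eⱼ φⱼ`.
Differentiating once more gives the Hessian `β² ((1 + S)⁻¹ ∑ⱼ eⱼ φⱼ φⱼᵀ - (1 + S)⁻² V Vᵀ)`.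
With `qⱼ = eⱼ / S`, `φ̄ = V / S` and the weighted covariance identity
`∑ⱼ qⱼ (xⱼ - x̄)(yⱼ - ȳ) = ∑ⱼ qⱼ xⱼ yⱼ - x̄ ȳ` this is the claimed formula.
For `m = 0` the loss is constant and both sides vanish.
-/

lemma sigmoid_neg_log {s : ℝ} (hs : 0 < s) : sigmoid (-Real.log s) = (1 + s)⁻¹ := by
  rw [sigmoid, neg_neg, Real.exp_log hs, one_div]

lemma neg_log_sigmoid_neg_log {s : ℝ} (hs : 0 < s) :
    -Real.log (sigmoid (-Real.log s)) = Real.log (1 + s) := by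
  rw [sigmoid_neg_log hs, Real.log_inv, neg_neg]

lemma Finset.sum_mul_sub_mul_sub {ι : Type*} (s : Finset ι) {q : ι → ℝ} (hq : ∑ j ∈ s, q j = 1)
    (x y : ι → ℝ) :
    ∑ j ∈ s, q j * ((x j - ∑ k ∈ s, q k * x k) * (y j - ∑ k ∈ s, q k * y k))
      = ∑ j ∈ s, q j * (x j * y j) - (∑ k ∈ s, q k * x k) * ∑ k ∈ s, q k * y k := by
  set X := ∑ k ∈ s, q k * x k
  set Y := ∑ k ∈ s, q k * y k
  have hexpand : ∀ j, q j * ((x j - X) * (y j - Y))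
      = q j * (x j * y j) - Y * (q j * x j) - X * (q j * y j) + X * Y * q j := fun j => by ring
  simp only [hexpand, sum_add_distrib, sum_sub_distrib, ← mul_sum, hq]
  ring

lemma sum_mul_inner_sub_mul_inner_sub {ι E : Type*} [NormedAddCommGroup E] [InnerProductSpace ℝ E]
    (s : Finset ι) {q : ι → ℝ} (hq : ∑ j ∈ s, q j = 1) (v : ι → E) (u w : E) :
    ∑ j ∈ s, q j * (⟪v j - ∑ k ∈ s, q k • v k, u⟫ * ⟪v j - ∑ k ∈ s, q k • v k, w⟫)
      = ∑ j ∈ s, q j * (⟪v j, u⟫ * ⟪v j, w⟫)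
        - ⟪∑ k ∈ s, q k • v k, u⟫ * ⟪∑ k ∈ s, q k • v k, w⟫ := by
  simp only [inner_sub_left, sum_inner, real_inner_smul_left]
  exact s.sum_mul_sub_mul_sub hq _ _

section ExpScore

variable {E ι : Type*} [NormedAddCommGroup E] [InnerProductSpace ℝ E]
  (φ : ι → E) (b : ι → ℝ) (β : ℝ)

noncomputable def expScore (θ : E) (j : ι) : ℝ := Real.exp (β * (⟪φ j, θ⟫ + b j))

lemma hasFDerivAt_expScore (θ : E) (j : ι) :
    HasFDerivAt (fun θ => expScore φ b β θ j) ((β * expScore φ b β θ j) • innerSL ℝ (φ j)) θ := by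
  have h := ((((innerSL ℝ (φ j)).hasFDerivAt (x := θ)).add_const (b j)).const_mul β).exp
  rwa [smul_smul, mul_comm] at h

variable [Fintype ι]

lemma hasFDerivAt_sum_expScore (θ : E) :
    HasFDerivAt (fun θ => ∑ j, expScore φ b β θ j)
      (∑ j, (β * expScore φ b β θ j) • innerSL ℝ (φ j)) θ :=
  HasFDerivAt.fun_sum fun j _ => hasFDerivAt_expScore φ b β θ j

lemma hasFDerivAt_sum_expScore_smul (θ : E) :
    HasFDerivAt (fun θ => ∑ j, expScore φ b β θ j • φ j)
      (∑ j, ((β * expScore φ b β θ j) • innerSL ℝ (φ j)).smulRight (φ j)) θ :=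
  HasFDerivAt.fun_sum fun j _ => (hasFDerivAt_expScore φ b β θ j).smul_const (φ j)

lemma sum_expScore_pos [Nonempty ι] (θ : E) : 0 < ∑ j, expScore φ b β θ j :=
  sum_pos (fun _ _ => Real.exp_pos _) univ_nonempty

lemma one_add_sum_expScore_pos (θ : E) : 0 < 1 + ∑ j, expScore φ b β θ j := by
  have : 0 ≤ ∑ j, expScore φ b β θ j := sum_nonneg fun _ _ => (Real.exp_pos _).le
  linarith

variable [CompleteSpace E]

lemma gradient_log_one_add_sum_expScore :
    gradient (fun θ => Real.log (1 + ∑ j, expScore φ b β θ j))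
      = fun θ => β • (1 + ∑ j, expScore φ b β θ j)⁻¹ • ∑ j, expScore φ b β θ j • φ j := by
  funext θ
  refine HasGradientAt.gradient ?_
  rw [hasGradientAt_iff_hasFDerivAt]
  refine (((hasFDerivAt_sum_expScore φ b β θ).const_add 1).log
    (one_add_sum_expScore_pos φ b β θ).ne').congr_fderiv ?_
  ext v
  simp only [smul_apply, _root_.sum_apply, innerSL_apply_apply,
    InnerProductSpace.toDual_apply_apply, real_inner_smul_left, sum_inner, smul_eq_mul, mul_sum]
  exact sum_congr rfl fun j _ => by ring

lemma inner_fderiv_gradient_log_one_add_sum_expScore (θ u w : E) :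
    ⟪fderiv ℝ (gradient fun θ => Real.log (1 + ∑ j, expScore φ b β θ j)) θ u, w⟫
      = β ^ 2 * ((∑ j, expScore φ b β θ j * (⟪φ j, u⟫ * ⟪φ j, w⟫)) / (1 + ∑ j, expScore φ b β θ j)
          - (∑ j, expScore φ b β θ j * ⟪φ j, u⟫) * (∑ j, expScore φ b β θ j * ⟪φ j, w⟫)
            / (1 + ∑ j, expScore φ b β θ j) ^ 2) := by
  have hinv := (hasDerivAt_inv (one_add_sum_expScore_pos φ b β θ).ne').comp_hasFDerivAt θ
    ((hasFDerivAt_sum_expScore φ b β θ).const_add 1)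
  have hgrad : HasFDerivAt
      (fun θ => β • (1 + ∑ j, expScore φ b β θ j)⁻¹ • ∑ j, expScore φ b β θ j • φ j) _ θ :=
    (hinv.smul (hasFDerivAt_sum_expScore_smul φ b β θ)).const_smul β
  rw [gradient_log_one_add_sum_expScore, hgrad.fderiv]
  simp only [smul_apply, add_apply, _root_.sum_apply, ContinuousLinearMap.smulRight_apply,
    innerSL_apply_apply, inner_add_left, real_inner_smul_left, sum_inner, smul_eq_mul,
    Function.comp_apply, mul_assoc, ← mul_sum]
  field_simp
  ring

end ExpScore

section Softmax

variable {d m : ℕ} (φ : Fin m → EuclideanSpace ℝ (Fin d)) (b : Fin m → ℝ) (β : ℝ)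
  (θ : EuclideanSpace ℝ (Fin d))

lemma sigmoid_Zfun [Nonempty (Fin m)] :
    sigmoid (Zfun φ b β θ) = (1 + ∑ j, expScore φ b β θ j)⁻¹ :=
  sigmoid_neg_log (sum_expScore_pos φ b β θ)

lemma neg_log_sigmoid_Zfun [Nonempty (Fin m)] :
    -Real.log (sigmoid (Zfun φ b β θ)) = Real.log (1 + ∑ j, expScore φ b β θ j) :=
  neg_log_sigmoid_neg_log (sum_expScore_pos φ b β θ)

lemma softmaxWeight_eq (j : Fin m) :
    softmaxWeight φ b β θ j = expScore φ b β θ j / ∑ k, expScore φ b β θ k :=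
  rfl

lemma sum_softmaxWeight [Nonempty (Fin m)] : ∑ j, softmaxWeight φ b β θ j = 1 := by
  simp only [softmaxWeight_eq, ← sum_div]
  exact div_self (sum_expScore_pos φ b β θ).ne'

lemma inner_softmaxMean (u : EuclideanSpace ℝ (Fin d)) :
    ⟪softmaxMean φ b β θ, u⟫
      = (∑ j, expScore φ b β θ j * ⟪φ j, u⟫) / ∑ j, expScore φ b β θ j := by
  simp only [softmaxMean, sum_inner, real_inner_smul_left, softmaxWeight_eq, sum_div,
    div_mul_eq_mul_div]

end Softmax

theorem hessian_multiNegativeLoss_general {d m : ℕ} (φ : Fin m → EuclideanSpace ℝ (Fin d))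
    (b : Fin m → ℝ) (β : ℝ) (θ : EuclideanSpace ℝ (Fin d))
    (u w : EuclideanSpace ℝ (Fin d)) :
    ⟪(fderiv ℝ (gradient (fun θ => -Real.log (sigmoid (Zfun φ b β θ)))) θ) u, w⟫
      = β ^ 2 * (1 - sigmoid (Zfun φ b β θ))
          * (sigmoid (Zfun φ b β θ)
                * (⟪softmaxMean φ b β θ, u⟫ * ⟪softmaxMean φ b β θ, w⟫)
            + ∑ j, softmaxWeight φ b β θ j
                * (⟪φ j - softmaxMean φ b β θ, u⟫
                    * ⟪φ j - softmaxMean φ b β θ, w⟫)) := by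
  rcases isEmpty_or_nonempty (Fin m) with hm | hm
  · have hconst :
        (fun θ => -Real.log (sigmoid (Zfun φ b β θ))) = fun _ => -Real.log (sigmoid 0) := by
      funext θ
      simp [Zfun]
    simp [hconst, softmaxMean]
  · have hS := sum_expScore_pos φ b β θ
    rw [funext fun θ => neg_log_sigmoid_Zfun φ b β θ,
      inner_fderiv_gradient_log_one_add_sum_expScore, softmaxMean,
      sum_mul_inner_sub_mul_inner_sub _ (sum_softmaxWeight φ b β θ), ← softmaxMean,
      inner_softmaxMean, inner_softmaxMean, sigmoid_Zfun]
    simp only [softmaxWeight_eq, div_mul_eq_mul_div, ← sum_div]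
    field_simp
    ring

theorem hessian_multiNegativeLoss {d m : ℕ} (φ : Fin m → EuclideanSpace ℝ (Fin d))
    (b : Fin m → ℝ) (β : ℝ) (hβ : 0 < β) (θ : EuclideanSpace ℝ (Fin d))
    (u w : EuclideanSpace ℝ (Fin d)) :
    ⟪(fderiv ℝ (gradient (fun θ => -Real.log (sigmoid (Zfun φ b β θ)))) θ) u, w⟫
      = β ^ 2 * (1 - sigmoid (Zfun φ b β θ))
          * (sigmoid (Zfun φ b β θ)
                * (⟪softmaxMean φ b β θ, u⟫ * ⟪softmaxMean φ b β θ, w⟫)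
            + ∑ j, softmaxWeight φ b β θ j
                * (⟪φ j - softmaxMean φ b β θ, u⟫
                    * ⟪φ j - softmaxMean φ b β θ, w⟫)) :=
  hessian_multiNegativeLoss_general φ b β θ u w
end

section
/- Elliptic potential lemma: let H_0 = γI with γ > 0, and H_k = H_{k-1} + α v_k v_k^⊤ for vectors v_k ∈ ℝ^d with ‖v_k‖² ≤ L and α > 0. Then Σ_{k=1}^n v_k^⊤ H_{k-1}^{-1} v_k ≤ ((1 + αL/γ)/α) · d log(1 + α n L/(γ d)). -/
/-!
Write `x_k = v_kᵀ H_{k-1}⁻¹ v_k`. The matrix determinant lemma gives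
`det H_k = det H_{k-1} · (1 + α x_k)`, so `∏ₖ (1 + α x_k) = det H_n / γ^d`, and AM–GM on the
eigenvalues bounds `det H_n ≤ (tr H_n / d)^d ≤ (γ + α n L / d)^d`. Since `H_{k-1} ⪰ γ I`, each
`α x_k` lies in `[0, αL/γ]`, where `log (1 + t) ≥ t / (1 + αL/γ)`; taking logarithms of the
product bound finishes the proof.
-/

open scoped Matrix MatrixOrder

open Finset

namespace Real

theorem div_one_add_le_log_one_add {t M : ℝ} (ht : 0 ≤ t) (htM : t ≤ M) :
    t / (1 + M) ≤ log (1 + t) := by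
  have h1t : 0 < 1 + t := by linarith
  calc t / (1 + M) ≤ t / (1 + t) := div_le_div_of_nonneg_left ht h1t (by linarith)
    _ = 1 - (1 + t)⁻¹ := by field_simp; ring
    _ ≤ log (1 + t) := one_sub_inv_le_log_of_pos h1t

theorem sum_le_one_add_mul_log_prod_one_add {ι : Type*} (s : Finset ι) {y : ι → ℝ} {M : ℝ}
    (hy0 : ∀ i ∈ s, 0 ≤ y i) (hyM : ∀ i ∈ s, y i ≤ M) :
    ∑ i ∈ s, y i ≤ (1 + M) * log (∏ i ∈ s, (1 + y i)) := by
  rw [log_prod fun i hi ↦ by linarith [hy0 i hi], mul_sum]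
  refine sum_le_sum fun i hi ↦ ?_
  have hM : 0 < 1 + M := by linarith [hy0 i hi, hyM i hi]
  rw [← div_le_iff₀' hM]
  exact div_one_add_le_log_one_add (hy0 i hi) (hyM i hi)

theorem prod_le_sum_div_card_pow {ι : Type*} (s : Finset ι) (z : ι → ℝ)
    (hz : ∀ i ∈ s, 0 ≤ z i) : ∏ i ∈ s, z i ≤ ((∑ i ∈ s, z i) / #s) ^ #s := by
  rcases s.eq_empty_or_nonempty with rfl | hs
  · simp
  have hcard : (0 : ℝ) < #s := by exact_mod_cast hs.card_pos
  have hamgm := geom_mean_le_arith_mean s (fun _ ↦ 1) z (fun _ _ ↦ zero_le_one)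
    (by simpa using hcard) hz
  simp only [rpow_one, sum_const, nsmul_eq_mul, mul_one, one_mul] at hamgm
  have hprod : 0 ≤ ∏ i ∈ s, z i := prod_nonneg hz
  calc ∏ i ∈ s, z i = ((∏ i ∈ s, z i) ^ (#s : ℝ)⁻¹) ^ #s := by
        rw [← rpow_natCast, ← rpow_mul hprod, inv_mul_cancel₀ hcard.ne', rpow_one]
    _ ≤ ((∑ i ∈ s, z i) / #s) ^ #s := by gcongr

end Real

namespace Fin

@[to_additive]
theorem apply_last_eq_apply_zero_mul_prod {M : Type*} [CommMonoid M] {n : ℕ}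
    {f : Fin (n + 1) → M} {g : Fin n → M} (h : ∀ k : Fin n, f k.succ = f k.castSucc * g k) :
    f (last n) = f 0 * ∏ k, g k := by
  induction n with
  | zero => simp
  | succ n ih =>
    have ih' := ih (f := fun k ↦ f k.castSucc) fun k ↦ h k.castSucc
    rw [castSucc_zero] at ih'
    rw [prod_univ_castSucc, ← mul_assoc, ← ih']
    exact h (last n)

end Fin

namespace Matrix

variable {ι : Type*} [DecidableEq ι]

theorem posDef_of_smul_one_le {γ : ℝ} (hγ : 0 < γ) {A : Matrix ι ι ℝ} (hA : γ • 1 ≤ A) :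
    A.PosDef := by
  simpa using (PosDef.one.smul hγ).add_posSemidef hA

variable [Fintype ι]

theorem det_add_vecMulVec {R : Type*} [CommRing R] {A : Matrix ι ι R} (hA : IsUnit A.det)
    (u v : ι → R) : (A + vecMulVec u v).det = A.det * (1 + v ⬝ᵥ A⁻¹ *ᵥ u) := by
  rw [vecMulVec_eq Unit, det_add_replicateCol_mul_replicateRow hA,
    det_unique (1 + replicateRow Unit v * A⁻¹ * replicateCol Unit u), dotProduct_mulVec]
  simp [mul_apply, vecMul, dotProduct]

theorem le_add_smul_vecMulVec_self {α : ℝ} (hα : 0 ≤ α) (A : Matrix ι ι ℝ) (u : ι → ℝ) :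
    A ≤ A + α • vecMulVec u u :=
  le_add_of_nonneg_right (smul_nonneg hα (posSemidef_vecMulVec_self_star u).nonneg)

theorem dotProduct_inv_mulVec_le {γ : ℝ} (hγ : 0 < γ) {A : Matrix ι ι ℝ} (hA : γ • 1 ≤ A)
    (x : ι → ℝ) : x ⬝ᵥ A⁻¹ *ᵥ x ≤ (x ⬝ᵥ x) / γ := by
  have hAw : A *ᵥ (A⁻¹ *ᵥ x) = x := by
    rw [mulVec_mulVec, mul_nonsing_inv _ (posDef_of_smul_one_le hγ hA).det_pos.ne'.isUnit,
      one_mulVec]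
  set w := A⁻¹ *ᵥ x
  have hlower : γ * (w ⬝ᵥ w) ≤ x ⬝ᵥ w := by
    simpa [sub_mulVec, smul_mulVec, hAw, dotProduct_comm w x] using hA.dotProduct_mulVec_nonneg w
  have hcs : (x ⬝ᵥ w) ^ 2 ≤ (x ⬝ᵥ x) * (w ⬝ᵥ w) := by
    simpa [dotProduct, sq] using sum_mul_sq_le_sq_mul_sq univ x w
  have hww : 0 ≤ w ⬝ᵥ w := dotProduct_star_self_nonneg w
  have hxx : 0 ≤ x ⬝ᵥ x := dotProduct_star_self_nonneg x
  rw [le_div_iff₀ hγ]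
  rcases ((mul_nonneg hγ.le hww).trans hlower).eq_or_lt with hq0 | hqpos
  · rwa [← hq0, zero_mul]
  · nlinarith

theorem PosSemidef.det_le_trace_div_card_pow {A : Matrix ι ι ℝ} (hA : A.PosSemidef) :
    A.det ≤ (A.trace / Fintype.card ι) ^ Fintype.card ι := by
  rw [hA.isHermitian.det_eq_prod_eigenvalues, hA.isHermitian.trace_eq_sum_eigenvalues]
  exact_mod_cast Real.prod_le_sum_div_card_pow univ _ fun i _ ↦ hA.eigenvalues_nonneg i

theorem PosSemidef.det_le_of_trace_le {A : Matrix ι ι ℝ} (hA : A.PosSemidef) {γ s : ℝ}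
    (hγ : 0 < γ) (htr : A.trace ≤ γ * Fintype.card ι + s) :
    A.det ≤ γ ^ Fintype.card ι * (1 + s / (γ * Fintype.card ι)) ^ Fintype.card ι := by
  rcases (Fintype.card ι).eq_zero_or_pos with hd | hd
  · have : IsEmpty ι := Fintype.card_eq_zero_iff.1 hd
    simp
  rw [← mul_pow]
  refine hA.det_le_trace_div_card_pow.trans
    (pow_le_pow_left₀ (by positivity [hA.trace_nonneg]) ?_ _)
  rw [div_le_iff₀ (by positivity)]
  field_simp
  linarith

end Matrix

section RankOneUpdates

open Matrix

variable {ι : Type*} [Fintype ι] [DecidableEq ι] {n : ℕ} {γ α : ℝ} {v : Fin n → ι → ℝ}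
  {H : Fin (n + 1) → Matrix ι ι ℝ}

theorem smul_one_le_of_rankOne_updates (hα : 0 ≤ α) (h0 : H 0 = γ • 1)
    (hrec : ∀ k : Fin n, H k.succ = H k.castSucc + α • vecMulVec (v k) (v k)) (k : Fin (n + 1)) :
    γ • 1 ≤ H k :=
  h0 ▸ Fin.monotone_iff_le_succ.2 (fun k ↦ hrec k ▸ le_add_smul_vecMulVec_self hα _ _)
    (Fin.zero_le k)

theorem posDef_of_rankOne_updates (hγ : 0 < γ) (hα : 0 ≤ α) (h0 : H 0 = γ • 1)
    (hrec : ∀ k : Fin n, H k.succ = H k.castSucc + α • vecMulVec (v k) (v k)) (k : Fin (n + 1)) :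
    (H k).PosDef :=
  posDef_of_smul_one_le hγ (smul_one_le_of_rankOne_updates hα h0 hrec k)

theorem det_last_of_rankOne_updates (hγ : 0 < γ) (hα : 0 ≤ α) (h0 : H 0 = γ • 1)
    (hrec : ∀ k : Fin n, H k.succ = H k.castSucc + α • vecMulVec (v k) (v k)) :
    (H (Fin.last n)).det =
      γ ^ Fintype.card ι * ∏ k, (1 + α * (v k ⬝ᵥ (H k.castSucc)⁻¹ *ᵥ v k)) := by
  refine (Fin.apply_last_eq_apply_zero_mul_prod (f := fun k ↦ (H k).det)
    (g := fun k ↦ 1 + α * (v k ⬝ᵥ (H k.castSucc)⁻¹ *ᵥ v k)) fun k ↦ ?_).trans (by simp [h0])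
  have hdet := (posDef_of_rankOne_updates hγ hα h0 hrec k.castSucc).det_pos
  rw [hrec k, ← smul_vecMulVec, det_add_vecMulVec hdet.ne'.isUnit, mulVec_smul, dotProduct_smul,
    smul_eq_mul]

theorem trace_last_of_rankOne_updates (h0 : H 0 = γ • 1)
    (hrec : ∀ k : Fin n, H k.succ = H k.castSucc + α • vecMulVec (v k) (v k)) :
    (H (Fin.last n)).trace = γ * Fintype.card ι + ∑ k, α * (v k ⬝ᵥ v k) := by
  refine (Fin.apply_last_eq_apply_zero_add_sum (f := fun k ↦ (H k).trace)
    (g := fun k ↦ α * (v k ⬝ᵥ v k)) fun k ↦ ?_).trans (by simp [h0])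
  simp [hrec k]

theorem prod_one_add_le_of_rankOne_updates (hγ : 0 < γ) (hα : 0 ≤ α) {L : ℝ}
    (hv : ∀ k, v k ⬝ᵥ v k ≤ L) (h0 : H 0 = γ • 1)
    (hrec : ∀ k : Fin n, H k.succ = H k.castSucc + α • vecMulVec (v k) (v k)) :
    ∏ k, (1 + α * (v k ⬝ᵥ (H k.castSucc)⁻¹ *ᵥ v k)) ≤
      (1 + α * n * L / (γ * Fintype.card ι)) ^ Fintype.card ι := by
  have htr : (H (Fin.last n)).trace ≤ γ * Fintype.card ι + α * n * L := by
    rw [trace_last_of_rankOne_updates h0 hrec]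
    calc _ ≤ γ * Fintype.card ι + ∑ _k : Fin n, α * L := by gcongr with k; exact hv k
      _ = _ := by simp; ring
  have hdet := (posDef_of_rankOne_updates hγ hα h0 hrec (Fin.last n)).posSemidef.det_le_of_trace_le
    hγ htr
  rw [det_last_of_rankOne_updates hγ hα h0 hrec] at hdet
  exact le_of_mul_le_mul_left hdet (by positivity)

end RankOneUpdates

theorem elliptic_potential_lemma_general {d n : ℕ} (γ α L : ℝ)
    (hγ : 0 < γ) (hα : 0 < α)
    (v : Fin n → Fin d → ℝ) (hv : ∀ k, ∑ i, v k i ^ 2 ≤ L)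
    (H : Fin (n + 1) → Matrix (Fin d) (Fin d) ℝ)
    (h0 : H 0 = γ • 1)
    (hrec : ∀ k : Fin n,
        H k.succ = H k.castSucc + α • Matrix.vecMulVec (v k) (v k)) :
    ∑ k : Fin n, v k ⬝ᵥ (H k.castSucc)⁻¹ *ᵥ v k
      ≤ ((1 + α * L / γ) / α) * (d * Real.log (1 + α * n * L / (γ * d))) := by
  obtain rfl | hn := n.eq_zero_or_pos
  · simp
  have hL : 0 ≤ L := (sum_nonneg fun i _ ↦ sq_nonneg _).trans (hv ⟨0, hn⟩)
  have hvL : ∀ k, v k ⬝ᵥ v k ≤ L := fun k ↦ by simpa [dotProduct, sq] using hv k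
  set x := fun k : Fin n ↦ v k ⬝ᵥ (H k.castSucc)⁻¹ *ᵥ v k
  have hx0 : ∀ k, 0 ≤ α * x k := fun k ↦ mul_nonneg hα.le <|
    (posDef_of_rankOne_updates hγ hα.le h0 hrec _).posSemidef.inv.dotProduct_mulVec_nonneg (v k)
  have hxL : ∀ k, α * x k ≤ α * L / γ := fun k ↦ by
    rw [mul_div_assoc]
    gcongr
    exact (Matrix.dotProduct_inv_mulVec_le hγ
      (smul_one_le_of_rankOne_updates hα.le h0 hrec _) _).trans (by gcongr; exact hvL k)
  have hlog : Real.log (∏ k, (1 + α * x k)) ≤ d * Real.log (1 + α * n * L / (γ * d)) := by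
    rw [← Real.log_pow]
    refine Real.log_le_log (prod_pos fun k _ ↦ by linarith [hx0 k]) ?_
    simpa using prod_one_add_le_of_rankOne_updates hγ hα.le hvL h0 hrec
  calc ∑ k, x k = (∑ k, α * x k) / α := by rw [← mul_sum]; field_simp
    _ ≤ ((1 + α * L / γ) * Real.log (∏ k, (1 + α * x k))) / α := by
      gcongr
      exact Real.sum_le_one_add_mul_log_prod_one_add _ (fun k _ ↦ hx0 k) fun k _ ↦ hxL k
    _ ≤ ((1 + α * L / γ) / α) * (d * Real.log (1 + α * n * L / (γ * d))) := by
      rw [div_mul_eq_mul_div]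
      gcongr

theorem elliptic_potential_lemma {d n : ℕ} (hd : 0 < d) (γ α L : ℝ)
    (hγ : 0 < γ) (hα : 0 < α)
    (v : Fin n → Fin d → ℝ) (hv : ∀ k, ∑ i, v k i ^ 2 ≤ L)
    (H : Fin (n + 1) → Matrix (Fin d) (Fin d) ℝ)
    (h0 : H 0 = γ • 1)
    (hrec : ∀ k : Fin n,
        H k.succ = H k.castSucc + α • Matrix.vecMulVec (v k) (v k)) :
    ∑ k : Fin n, v k ⬝ᵥ (H k.castSucc)⁻¹ *ᵥ v k
      ≤ ((1 + α * L / γ) / α) * (d * Real.log (1 + α * n * L / (γ * d))) :=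
  elliptic_potential_lemma_general γ α L hγ hα v hv H h0 hrec
end

section
/- Implicit-function perturbation bound: let F, G : ℝ^d → ℝ be twice continuously differentiable with minimizers θ* of F and θ̂ of G (so ∇F(θ*) = 0 and ∇G(θ̂) = 0). Suppose the integrated Hessian Σ̄ = ∫_0^1 ∇²G(θ* + t(θ̂ - θ*)) dt satisfies Σ̄ ⪰ Σ_0 for some positive definite Σ_0. Then ‖θ̂ - θ*‖_{Σ_0} ≤ ‖∇G(θ*) - ∇F(θ*)‖_{Σ_0^{-1}}, where ‖u‖_A = √(u^⊤ A u). -/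
/-!
Along the segment from `θs` to `θh`, the fundamental theorem of calculus gives
`(θh - θs)ᵀ Σ̄ = ∇G(θh) - ∇G(θs) = -∇G(θs)`. Pairing with `v = θh - θs` and using `Σ̄ ⪰ Σ₀`
yields `‖v‖²_{Σ₀} ≤ -⟪∇G(θs), v⟫`, and completing the square in the `Σ₀⁻¹`-norm turns this into
`‖v‖²_{Σ₀} ≤ ‖∇G(θs)‖²_{Σ₀⁻¹}`; finally `∇F(θs) = 0`.
-/

open scoped Matrix

theorem integral_fderiv_segment {E : Type*} [NormedAddCommGroup E] [NormedSpace ℝ E]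
    {H : E → ℝ} (hH : ContDiff ℝ 1 H) (x y : E) :
    ∫ t in (0:ℝ)..1, fderiv ℝ H (x + t • (y - x)) (y - x) = H y - H x := by
  have hpath : ∀ t : ℝ, HasDerivAt (fun t : ℝ => x + t • (y - x)) (y - x) t := fun t => by
    simpa using ((hasDerivAt_id t).smul_const (y - x)).const_add x
  have hderiv : ∀ t : ℝ, HasDerivAt (fun t => H (x + t • (y - x)))
      (fderiv ℝ H (x + t • (y - x)) (y - x)) t := fun t =>
    (hH.differentiable one_ne_zero _).hasFDerivAt.comp_hasDerivAt t (hpath t)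
  have hcont : Continuous fun t : ℝ => fderiv ℝ H (x + t • (y - x)) (y - x) := by
    have := hH.continuous_fderiv one_ne_zero
    fun_prop
  simpa using intervalIntegral.integral_eq_sub_of_hasDerivAt (fun t _ => hderiv t)
    (hcont.intervalIntegrable 0 1)

section Coordinates
variable {ι : Type*} [Fintype ι] [DecidableEq ι]

theorem ContinuousLinearMap.apply_eq_sum_mul_single (L : (ι → ℝ) →L[ℝ] ℝ) (v : ι → ℝ) :
    L v = ∑ i, v i * L (Pi.single i 1) := by
  conv_lhs => rw [← Finset.univ_sum_single v, map_sum]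
  refine Finset.sum_congr rfl fun i _ => ?_
  rw [← smul_eq_mul, ← map_smul, ← Pi.single_smul', smul_eq_mul, mul_one]

noncomputable def gradVec (f : (ι → ℝ) → ℝ) (x : ι → ℝ) : ι → ℝ :=
  fun i => fderiv ℝ f x (Pi.single i 1)

noncomputable def integratedHessian (G : (ι → ℝ) → ℝ) (x y : ι → ℝ) : Matrix ι ι ℝ :=
  Matrix.of fun i j => ∫ t in (0:ℝ)..1,
    fderiv ℝ (fun θ => gradVec G θ j) (x + t • (y - x)) (Pi.single i 1)

theorem vecMul_integratedHessian {G : (ι → ℝ) → ℝ} (hG : ContDiff ℝ 2 G) (x y : ι → ℝ) :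
    (y - x) ᵥ* integratedHessian G x y = gradVec G y - gradVec G x := by
  funext j
  have hH : ContDiff ℝ 1 fun θ => gradVec G θ j :=
    (hG.fderiv_right le_rfl).clm_apply contDiff_const
  have hcont : ∀ w, Continuous fun t : ℝ =>
      fderiv ℝ (fun θ => gradVec G θ j) (x + t • (y - x)) w := fun w => by
    have := hH.continuous_fderiv one_ne_zero
    fun_prop
  calc ((y - x) ᵥ* integratedHessian G x y) j
      = ∑ i, ∫ t in (0:ℝ)..1,
          (y - x) i * fderiv ℝ (fun θ => gradVec G θ j) (x + t • (y - x)) (Pi.single i 1) := by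
        simp only [Matrix.vecMul, dotProduct, integratedHessian, Matrix.of_apply,
          intervalIntegral.integral_const_mul]
    _ = ∫ t in (0:ℝ)..1, ∑ i,
          (y - x) i * fderiv ℝ (fun θ => gradVec G θ j) (x + t • (y - x)) (Pi.single i 1) :=
        (intervalIntegral.integral_finsetSum fun i _ =>
          (continuous_const.mul (hcont _)).intervalIntegrable 0 1).symm
    _ = ∫ t in (0:ℝ)..1, fderiv ℝ (fun θ => gradVec G θ j) (x + t • (y - x)) (y - x) := by
        simp only [← ContinuousLinearMap.apply_eq_sum_mul_single]
    _ = (gradVec G y - gradVec G x) j := integral_fderiv_segment hH x y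

theorem Matrix.PosDef.dotProduct_mulVec_le_inv_of_le_neg {S : Matrix ι ι ℝ} (hS : S.PosDef)
    {v g : ι → ℝ} (h : v ⬝ᵥ S *ᵥ v ≤ -(g ⬝ᵥ v)) :
    v ⬝ᵥ S *ᵥ v ≤ g ⬝ᵥ S⁻¹ *ᵥ g := by
  have hSym : Sᵀ = S := by
    rw [← Matrix.conjTranspose_eq_transpose_of_trivial]; exact hS.isHermitian.eq
  have hDet : IsUnit S.det := (Matrix.isUnit_iff_isUnit_det S).mp hS.isUnit
  have hInv : S⁻¹ *ᵥ S *ᵥ v = v := by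
    rw [Matrix.mulVec_mulVec, Matrix.nonsing_inv_mul _ hDet, Matrix.one_mulVec]
  have hCross : S *ᵥ v ⬝ᵥ S⁻¹ *ᵥ g = g ⬝ᵥ v := by
    rw [← Matrix.vecMul_transpose, hSym, ← Matrix.dotProduct_mulVec, Matrix.mulVec_mulVec,
      Matrix.mul_nonsing_inv _ hDet, Matrix.one_mulVec, dotProduct_comm]
  have hSq := hS.inv.posSemidef.dotProduct_mulVec_nonneg (S *ᵥ v + g)
  simp only [star_trivial, Matrix.mulVec_add, add_dotProduct, dotProduct_add, hInv, hCross] at hSq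
  rw [dotProduct_comm (S *ᵥ v) v] at hSq
  linarith

end Coordinates

theorem implicit_function_perturbation_bound_general {d : ℕ}
    (F G : (Fin d → ℝ) → ℝ) (hG : ContDiff ℝ 2 G)
    (θs θh : Fin d → ℝ)
    (hFcrit : ∀ i, fderiv ℝ F θs (Pi.single i 1) = 0)
    (hGcrit : ∀ i, fderiv ℝ G θh (Pi.single i 1) = 0)
    (Sbar S0 : Matrix (Fin d) (Fin d) ℝ)
    (hSbar : ∀ i j, Sbar i j = ∫ t in (0:ℝ)..1,
        fderiv ℝ (fun θ => fderiv ℝ G θ (Pi.single j 1))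
          (θs + t • (θh - θs)) (Pi.single i 1))
    (hS0 : S0.PosDef) (hLo : (Sbar - S0).PosSemidef) :
    Real.sqrt ((θh - θs) ⬝ᵥ S0 *ᵥ (θh - θs))
      ≤ Real.sqrt ((fun i => fderiv ℝ G θs (Pi.single i 1)
            - fderiv ℝ F θs (Pi.single i 1)) ⬝ᵥ S0⁻¹ *ᵥ
          (fun i => fderiv ℝ G θs (Pi.single i 1)
            - fderiv ℝ F θs (Pi.single i 1))) := by
  have hSbarEq : Sbar = integratedHessian G θs θh := Matrix.ext hSbar
  have hDiscrepancy : (fun i => fderiv ℝ G θs (Pi.single i 1)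
      - fderiv ℝ F θs (Pi.single i 1)) = gradVec G θs := by
    funext i; simp [gradVec, hFcrit i]
  have hQuad : (θh - θs) ⬝ᵥ Sbar *ᵥ (θh - θs) = -(gradVec G θs ⬝ᵥ (θh - θs)) := by
    rw [Matrix.dotProduct_mulVec, hSbarEq, vecMul_integratedHessian hG,
      show gradVec G θh = 0 from funext hGcrit, zero_sub, neg_dotProduct]
  have hLoewner := hLo.dotProduct_mulVec_nonneg (θh - θs)
  rw [star_trivial, Matrix.sub_mulVec, dotProduct_sub, hQuad, sub_nonneg] at hLoewner
  rw [hDiscrepancy]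
  exact Real.sqrt_le_sqrt (hS0.dotProduct_mulVec_le_inv_of_le_neg hLoewner)

theorem implicit_function_perturbation_bound {d : ℕ}
    (F G : (Fin d → ℝ) → ℝ) (hF : ContDiff ℝ 2 F) (hG : ContDiff ℝ 2 G)
    (θs θh : Fin d → ℝ)
    (hFcrit : ∀ i, fderiv ℝ F θs (Pi.single i 1) = 0)
    (hGcrit : ∀ i, fderiv ℝ G θh (Pi.single i 1) = 0)
    (Sbar S0 : Matrix (Fin d) (Fin d) ℝ)
    (hSbar : ∀ i j, Sbar i j = ∫ t in (0:ℝ)..1,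
        fderiv ℝ (fun θ => fderiv ℝ G θ (Pi.single j 1))
          (θs + t • (θh - θs)) (Pi.single i 1))
    (hS0 : S0.PosDef) (hLo : (Sbar - S0).PosSemidef) :
    Real.sqrt ((θh - θs) ⬝ᵥ S0 *ᵥ (θh - θs))
      ≤ Real.sqrt ((fun i => fderiv ℝ G θs (Pi.single i 1)
            - fderiv ℝ F θs (Pi.single i 1)) ⬝ᵥ S0⁻¹ *ᵥ
          (fun i => fderiv ℝ G θs (Pi.single i 1)
            - fderiv ℝ F θs (Pi.single i 1))) :=
  implicit_function_perturbation_bound_general F G hG θs θh hFcrit hGcrit Sbar S0 hSbar hS0 hLo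
end
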